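/- Let H ∈ ℝ⟦X⟧ have constant coefficient 1 and set h = X·H; suppose h ≠ X. Let f, g ∈ ℝ⟦X⟧ where f has constant coefficient 0 and nonzero linear coefficient, and g has nonzero constant coefficient. If f∘h = h∘f and g·(H∘f) = H·(g∘h), then there exists a nonzero c ∈ ℝ such that X·g = c·f. -/

import Mathlib

/-!
Write `H = 1 + a X^m + O(X^(m+1))` with `m ≥ 1` and `a ≠ 0`, which is possible because `h ≠ X`.
Both `f` and `X g` solve the linear equation `φ ∘ h = φ · (H ∘ f)`, the latter by the second
commutation relation. If `φ = X^j ψ` is a solution, cancel `X^j` and reduce modulo `X^(m+1)`: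
there `H^j ≡ 1 + j a X^m`, `ψ ∘ h ≡ ψ` and `H ∘ f ≡ 1 + a f₁^m X^m`, so `ψ(0) a (j - f₁^m) = 0`.
For `φ = f` (so `j = 1`) this gives `f₁^m = 1`, and then no nonzero solution vanishes to order
two, since `j - 1 ≠ 0` for `j ≥ 2`. The solution `g(0) f - f₁ X g` vanishes to order two.
-/

open PowerSeries

/-- Substitution (composition) of formal power series: `psComp g f = g ∘ f`,
the substitution of `f` into `g`.  When `f` has zero constant coefficient, the
`n`-th coefficient of `g ∘ f` is `∑_{k=0}^{n} g_k · [zⁿ] fᵏ`. -/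
noncomputable def psComp (g f : PowerSeries ℝ) : PowerSeries ℝ :=
  PowerSeries.mk fun n => ∑ k ∈ Finset.range (n + 1),
    PowerSeries.coeff k g * PowerSeries.coeff n (f ^ k)

theorem one_add_pow_of_sq_eq_zero {S : Type*} [CommRing S] {e : S} (he : e ^ 2 = 0) (j : ℕ) :
    (1 + e) ^ j = 1 + j * e := by
  induction j with
  | zero => simp
  | succ j ih => rw [pow_succ, ih]; push_cast; linear_combination (j : S) * he

namespace PowerSeries

variable {R : Type*} [CommRing R]

theorem coeff_pow_eq_zero_of_lt {f : R⟦X⟧} (hf : constantCoeff f = 0) {n k : ℕ} (h : n < k) :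
    coeff n (f ^ k) = 0 :=
  X_pow_dvd_iff.mp (pow_dvd_pow_of_dvd (X_dvd_iff.mpr hf) k) n h

noncomputable def modXPow (m : ℕ) : R⟦X⟧ →+* R⟦X⟧ ⧸ Ideal.span {(X : R⟦X⟧) ^ (m + 1)} :=
  Ideal.Quotient.mk _

variable {m : ℕ}

theorem modXPow_eq_iff {A B : R⟦X⟧} :
    modXPow m A = modXPow m B ↔ ∀ d ≤ m, coeff d A = coeff d B := by
  simp [modXPow, Ideal.Quotient.eq, Ideal.mem_span_singleton, X_pow_dvd_iff, sub_eq_zero]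

theorem modXPow_X_pow_succ : modXPow m ((X : R⟦X⟧) ^ (m + 1)) = 0 :=
  Ideal.Quotient.eq_zero_iff_mem.mpr (Ideal.mem_span_singleton_self _)

theorem modXPow_X_pow_mul (g : R⟦X⟧) :
    modXPow m (X ^ m * g) = modXPow m (C (constantCoeff g) * X ^ m) := by
  rw [modXPow_eq_iff]
  intro d hd
  rcases hd.lt_or_eq with hd | rfl
  · simp [coeff_X_pow_mul', coeff_X_pow, hd.not_ge, hd.ne]
  · simp [coeff_X_pow_mul', coeff_zero_eq_constantCoeff]

theorem modXPow_subst_congr_left {u A B : R⟦X⟧} (hu : constantCoeff u = 0)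
    (hAB : modXPow m A = modXPow m B) : modXPow m (A.subst u) = modXPow m (B.subst u) := by
  obtain ⟨Q, hQ⟩ := Ideal.mem_span_singleton.mp (Ideal.Quotient.eq.mp hAB)
  obtain ⟨P, hP⟩ := pow_dvd_pow_of_dvd (X_dvd_iff.mpr hu) (m + 1)
  have hsub := HasSubst.of_constantCoeff_zero' hu
  rw [← sub_eq_zero, ← map_sub, ← subst_sub hsub, hQ, subst_mul hsub, subst_pow hsub,
    subst_X hsub, hP, map_mul, map_mul, modXPow_X_pow_succ, zero_mul, zero_mul]

theorem modXPow_subst_congr_right {u v : R⟦X⟧} (hu : constantCoeff u = 0)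
    (hv : constantCoeff v = 0) (huv : modXPow m u = modXPow m v) (φ : R⟦X⟧) :
    modXPow m (φ.subst u) = modXPow m (φ.subst v) := by
  rw [modXPow_eq_iff]
  intro d hd
  rw [coeff_subst' (HasSubst.of_constantCoeff_zero' hu),
    coeff_subst' (HasSubst.of_constantCoeff_zero' hv)]
  refine finsum_congr fun k => ?_
  have hpow : modXPow m (u ^ k) = modXPow m (v ^ k) := by rw [map_pow, map_pow, huv]
  rw [modXPow_eq_iff.mp hpow d hd]

theorem exists_modXPow_eq_one_add_C_mul_X_pow {H : R⟦X⟧} (hH0 : constantCoeff H = 1)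
    (hH1 : H ≠ 1) : ∃ m a, 0 < m ∧ a ≠ 0 ∧ modXPow m H = modXPow m (1 + C a * X ^ m) := by
  classical
  have hex : ∃ s, 0 < s ∧ coeff s H ≠ 0 := by
    by_contra! hc
    refine hH1 (ext fun s => ?_)
    rcases Nat.eq_zero_or_pos s with rfl | hs
    · simp [hH0]
    · simp [hc s hs, coeff_one, hs.ne']
  obtain ⟨hm, ha⟩ := Nat.find_spec hex
  refine ⟨Nat.find hex, _, hm, ha, modXPow_eq_iff.mpr fun d hd => ?_⟩
  rcases Nat.eq_zero_or_pos d with rfl | hd0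
  · simp [hH0]
  rcases hd.lt_or_eq with hd | rfl
  · have := Nat.find_min hex hd
    simp_all [coeff_X_pow, coeff_one, hd.ne, hd0.ne']
  · simp [coeff_X_pow, coeff_one, hm.ne']

theorem modXPow_pow_self {f : R⟦X⟧} (hf : constantCoeff f = 0) :
    modXPow m (f ^ m) = modXPow m (C (coeff 1 f ^ m) * X ^ m) := by
  obtain ⟨f', rfl⟩ := X_dvd_iff.mpr hf
  have hcoeff : coeff 1 (X * f') = constantCoeff f' := by simp
  rw [mul_pow, modXPow_X_pow_mul, map_pow, hcoeff]

theorem coeff_one_add_C_mul_X_pow_mul (c : R) (ψ : R⟦X⟧) :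
    coeff m ((1 + C c * X ^ m) * ψ) = coeff m ψ + c * constantCoeff ψ := by
  simp [add_mul, mul_assoc, coeff_X_pow_mul']

section

variable {H : R⟦X⟧} {a : R} (hm : 0 < m) (hH : modXPow m H = modXPow m (1 + C a * X ^ m))
include hH

include hm in
theorem modXPow_pow (j : ℕ) : modXPow m (H ^ j) = modXPow m (1 + C (j * a) * X ^ m) := by
  have hsq : modXPow m (C a * X ^ m) ^ 2 = 0 := by
    rw [← map_pow, modXPow, Ideal.Quotient.eq_zero_iff_mem, Ideal.mem_span_singleton]
    refine Dvd.intro (C (a ^ 2) * X ^ (m - 1)) ?_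
    rw [mul_pow, ← pow_mul, ← map_pow, show m * 2 = (m + 1) + (m - 1) by omega, pow_add]
    ring
  rw [map_pow, hH, map_add, map_one, one_add_pow_of_sq_eq_zero hsq]
  simp [mul_assoc]

theorem modXPow_X_mul : modXPow m (X * H) = modXPow m X := by
  rw [map_mul, hH, ← map_mul, mul_add, mul_one, map_add, ← mul_assoc, mul_comm X, mul_assoc,
    ← pow_succ', map_mul, modXPow_X_pow_succ, mul_zero, add_zero]

theorem modXPow_subst_X_mul (φ : R⟦X⟧) : modXPow m (φ.subst (X * H)) = modXPow m φ := by
  rw [modXPow_subst_congr_right (by simp) (by simp) (modXPow_X_mul hH), X_subst]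

theorem modXPow_subst {f : R⟦X⟧} (hf : constantCoeff f = 0) :
    modXPow m (H.subst f) = modXPow m (1 + C (a * coeff 1 f ^ m) * X ^ m) := by
  have hsub := HasSubst.of_constantCoeff_zero' hf
  have hexpand : (1 + C a * X ^ m : R⟦X⟧).subst f = 1 + C a * f ^ m := by
    rw [← coe_substAlgHom hsub, ← algebraMap_eq, map_add, map_one, map_mul, map_pow,
      AlgHom.commutes, substAlgHom_X]
  rw [modXPow_subst_congr_left hf hH, hexpand, map_add, map_add, map_mul, modXPow_pow_self hf]
  simp [mul_assoc]

include hm in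
theorem constantCoeff_mul_mul_natCast_sub_eq_zero {f ψ : R⟦X⟧} (hf : constantCoeff f = 0)
    {j : ℕ} (heq : (X ^ j * ψ).subst (X * H) = X ^ j * ψ * H.subst f) :
    constantCoeff ψ * (a * (j - coeff 1 f ^ m)) = 0 := by
  have hsub : HasSubst (X * H) := HasSubst.of_constantCoeff_zero' (by simp)
  have hcancel : H ^ j * ψ.subst (X * H) = ψ * H.subst f := by
    have hexpand : (X ^ j * ψ).subst (X * H) = X ^ j * (H ^ j * ψ.subst (X * H)) := by
      rw [subst_mul hsub, subst_pow hsub, subst_X hsub, mul_pow, mul_assoc]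
    exact X_pow_mul_cancel (by rw [← hexpand, heq, mul_assoc])
  have hmod := congrArg (modXPow m) hcancel
  rw [map_mul, map_mul, modXPow_pow hm hH, modXPow_subst_X_mul hH, modXPow_subst hH hf,
    ← map_mul, ← map_mul, mul_comm ψ, modXPow_eq_iff] at hmod
  have := hmod m le_rfl
  rw [coeff_one_add_C_mul_X_pow_mul, coeff_one_add_C_mul_X_pow_mul] at this
  linear_combination this

variable [IsDomain R]

include hm in
theorem coeff_one_pow_eq_one (ha : a ≠ 0) {f : R⟦X⟧} (hf0 : constantCoeff f = 0)
    (hf1 : coeff 1 f ≠ 0) (heq : f.subst (X * H) = f * H.subst f) : coeff 1 f ^ m = 1 := by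
  obtain ⟨f', rfl⟩ := X_dvd_iff.mpr hf0
  have hcoeff : coeff 1 (X * f') = constantCoeff f' := by simp
  have key := constantCoeff_mul_mul_natCast_sub_eq_zero hm hH hf0 (j := 1) (ψ := f')
    (by rwa [pow_one])
  rw [hcoeff] at hf1 ⊢
  rw [hcoeff, Nat.cast_one] at key
  simp only [mul_eq_zero, hf1, ha, sub_eq_zero, false_or] at key
  exact key.symm

include hm in
theorem eq_zero_of_subst_X_mul_eq [CharZero R] (ha : a ≠ 0) {f φ : R⟦X⟧}
    (hf0 : constantCoeff f = 0) (hf1 : coeff 1 f ^ m = 1) (hφ : X ^ 2 ∣ φ)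
    (heq : φ.subst (X * H) = φ * H.subst f) : φ = 0 := by
  by_contra hne
  have hj : 2 ≤ φ.order.toNat := by
    by_contra! hj
    exact coeff_order hne (X_pow_dvd_iff.mp hφ _ hj)
  rw [← X_pow_order_mul_divXPowOrder (f := φ)] at heq
  have key := constantCoeff_mul_mul_natCast_sub_eq_zero hm hH hf0 heq
  rw [hf1] at key
  have hj1 : (φ.order.toNat : R) - 1 ≠ 0 := by
    rw [sub_ne_zero, ← Nat.cast_one, Ne, Nat.cast_inj]
    omega
  simp [constantCoeff_divXPowOrder_eq_zero_iff, hne, ha, hj1] at key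

end

end PowerSeries

theorem psComp_eq_subst {g f : ℝ⟦X⟧} (hf : constantCoeff f = 0) : psComp g f = g.subst f := by
  ext n
  rw [coeff_subst' (HasSubst.of_constantCoeff_zero' hf),
    finsum_eq_sum_of_support_subset (s := Finset.range (n + 1))]
  · simp [psComp]
  · intro k hk
    by_contra hkn
    simp only [Finset.coe_range, Set.mem_Iio, not_lt] at hkn
    exact hk (by simp [coeff_pow_eq_zero_of_lt hf (Nat.lt_of_succ_le hkn)])

theorem stmt12 (H : PowerSeries ℝ) (hH0 : constantCoeff H = 1)
    (h : PowerSeries ℝ) (hh : h = X * H) (hhX : h ≠ X)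
    (f g : PowerSeries ℝ)
    (hf0 : constantCoeff f = 0) (hf1 : coeff 1 f ≠ 0)
    (hg0 : constantCoeff g ≠ 0)
    (hcomm1 : psComp f h = psComp h f)
    (hcomm2 : g * psComp H f = H * psComp g h) :
    ∃ c : ℝ, c ≠ 0 ∧ X * g = C c * f := by
  subst hh
  obtain ⟨m, a, hm, ha, hH⟩ :=
    exists_modXPow_eq_one_add_C_mul_X_pow hH0 (by rintro rfl; exact hhX (mul_one X))
  have hXH : constantCoeff (X * H) = 0 := by simp
  have hsub := HasSubst.of_constantCoeff_zero' hXH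
  have hfsub := HasSubst.of_constantCoeff_zero' hf0
  rw [psComp_eq_subst hXH, psComp_eq_subst hf0] at hcomm1 hcomm2
  have hfeq : f.subst (X * H) = f * H.subst f := by
    rw [hcomm1, subst_mul hfsub, subst_X hfsub]
  have hgeq : (X * g).subst (X * H) = X * g * H.subst f := by
    rw [subst_mul hsub, subst_X hsub, mul_assoc, ← hcomm2, mul_assoc]
  set w := constantCoeff g • f - coeff 1 f • (X * g)
  have hw : w = 0 := by
    refine eq_zero_of_subst_X_mul_eq hm hH ha hf0 (coeff_one_pow_eq_one hm hH ha hf0 hf1 hfeq)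
      ?_ ?_
    · refine X_pow_dvd_iff.mpr fun d hd => ?_
      interval_cases d
      · simp [w, hf0]
      · simp [w, mul_comm]
    · rw [subst_sub hsub, subst_smul hsub, subst_smul hsub, hfeq, hgeq, sub_mul, smul_mul_assoc,
        smul_mul_assoc]
  rw [sub_eq_zero] at hw
  refine ⟨(coeff 1 f)⁻¹ * constantCoeff g, mul_ne_zero (inv_ne_zero hf1) hg0, ?_⟩
  rw [← smul_eq_C_mul, mul_smul, hw, inv_smul_smul₀ hf1]
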